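/- Let μ be an invariant measure of a cellular automaton with totally asymmetric noise (e.g., Toom's or Stavskaya's model) satisfying the lower bound μ(+_{C_n}) ≥ exp(−c n^{d−1}) for all n, where +_{C_n} is the event of seeing the all-plus configuration in the cube C_n. If μ is translation invariant and μ ≠ δ_+, then μ does not satisfy GCB(C) for any C > 0. -/

import Mathlib

open MeasureTheory Filter
open scoped ENNReal

/-- Spatial configurations: spins (encoded as `Bool`, `true` = +1) indexed by `ι`. -/
abbrev Config (ι : Type*) := ι → Bool

/-- The lattice `ℤ^d`. -/
abbrev Site (d : ℕ) := Fin d → ℤ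

/-- Spin value `±1` of a Boolean. -/
noncomputable def spin (b : Bool) : ℝ := if b then 1 else -1

/-- Flip the spin of `σ` at site `x`. -/
def flipAt {ι : Type*} [DecidableEq ι] (σ : Config ι) (x : ι) : Config ι :=
  Function.update σ x (!σ x)

/-- Oscillation `δ_x f = sup_σ (f(σ^{(x)}) - f(σ))`. -/
noncomputable def osc {ι : Type*} [DecidableEq ι] (f : Config ι → ℝ) (x : ι) : ℝ :=
  ⨆ σ : Config ι, (f (flipAt σ x) - f σ)

/-- `‖δ f‖₂²  = ∑_x (δ_x f)²`. -/
noncomputable def oscNormSq {ι : Type*} [DecidableEq ι] (f : Config ι → ℝ) : ℝ :=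
  ∑' x : ι, osc f x ^ 2

/-- `‖δ f‖₁ = ∑_x δ_x f`. -/
noncomputable def oscNorm1 {ι : Type*} [DecidableEq ι] (f : Config ι → ℝ) : ℝ :=
  ∑' x : ι, osc f x

/-- `f` depends only on the coordinates in `Λ` (i.e. `f` is `F_Λ`-measurable). -/
def LocalOn {ι : Type*} (Λ : Finset ι) (f : Config ι → ℝ) : Prop :=
  ∀ σ τ : Config ι, (∀ x ∈ Λ, σ x = τ x) → f σ = f τ

/-- `f` is a local function. -/
def IsLocal {ι : Type*} (f : Config ι → ℝ) : Prop := ∃ Λ : Finset ι, LocalOn Λ f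

/-- Gaussian concentration bound with constant `C`:
`log ∫ e^{f - ∫ f dμ} dμ ≤ (C/2) ‖δ f‖₂²` for every local function `f`. -/
def GCB {ι : Type*} [DecidableEq ι] (μ : Measure (Config ι)) (C : ℝ) : Prop :=
  ∀ f : Config ι → ℝ, IsLocal f →
    Real.log (∫ σ, Real.exp (f σ - ∫ τ, f τ ∂μ) ∂μ) ≤ C / 2 * oscNormSq f

/-- The cylinder set of configurations agreeing with `b` on `Λ`. -/
def cyl {ι : Type*} (Λ : Finset ι) (b : ι → Bool) : Set (Config ι) :=
  {σ | ∀ x ∈ Λ, σ x = b x}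

/-- `h_x(η) = ∑_{A ⋐ ℤ^d} r_A η_{A+x}`. -/
noncomputable def hfun {d : ℕ} (r : Finset (Site d) → ℝ) (x : Site d)
    (η : Config (Site d)) : ℝ :=
  ∑' A : Finset (Site d), r A * ∏ y ∈ A, spin (η (y + x))

/-- `p_x(η) = ½ (1 + η_x h_x(η))`, the probability that the new spin at `x` is `+1`. -/
noncomputable def pPlus {d : ℕ} (r : Finset (Site d) → ℝ) (x : Site d)
    (η : Config (Site d)) : ℝ :=
  (1 + spin (η x) * hfun r x η) / 2

/-- A (translation-invariant) probabilistic cellular automaton on `{-1,+1}^{ℤ^d}`: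
given the configuration `η`, the next configuration is distributed as the product
measure with marginals `p_x(η)` at site `x`. -/
structure PCA (d : ℕ) where
  r : Finset (Site d) → ℝ
  summable_r : Summable fun A => |r A|
  hbound : ∀ (x : Site d) (η : Config (Site d)), |hfun r x η| ≤ 1
  ker : Config (Site d) → Measure (Config (Site d))
  ker_meas : Measurable ker
  ker_prob : ∀ η, IsProbabilityMeasure (ker η)
  ker_marginal : ∀ (η : Config (Site d)) (Λ : Finset (Site d)) (b : Site d → Bool),
    ker η (cyl Λ b) =
      ∏ x ∈ Λ, ENNReal.ofReal (if b x then pPlus r x η else 1 - pPlus r x η)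

/-- The transition operator `P` acting on functions: `Pf(η) = ∫ f(σ) p(dσ|η)`. -/
noncomputable def Pop {d : ℕ} (P : PCA d) (f : Config (Site d) → ℝ)
    (η : Config (Site d)) : ℝ :=
  ∫ σ, f σ ∂(P.ker η)

/-- The transition operator acting on measures: `μP`. -/
noncomputable def Pmeas {d : ℕ} (P : PCA d) (μ : Measure (Config (Site d))) :
    Measure (Config (Site d)) :=
  μ.bind P.ker

/-- `ψ(x) = ∑_{A ∋ x} |r_A|`. -/
noncomputable def psi {d : ℕ} (P : PCA d) (x : Site d) : ℝ :=
  ∑' A : Finset (Site d), if x ∈ A then |P.r A| else 0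

/-- `‖ψ‖₁ = ∑_{A ⋐ ℤ^d} |A| |r_A|`. -/
noncomputable def psiNorm1 {d : ℕ} (P : PCA d) : ℝ :=
  ∑' A : Finset (Site d), (A.card : ℝ) * |P.r A|

/-- The contraction coefficient `κ = ‖ψ‖₁² = (∑_A |A||r_A|)²`. -/
noncomputable def kappa {d : ℕ} (P : PCA d) : ℝ := psiNorm1 P ^ 2

/-- The shift (translation) of a configuration by `a ∈ ℤ^d`. -/
def shift {d : ℕ} (a : Site d) (σ : Config (Site d)) : Config (Site d) :=
  fun x => σ (x + a)

/-- Translation invariance of a measure on `{-1,+1}^{ℤ^d}`. -/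
def TransInv {d : ℕ} (μ : Measure (Config (Site d))) : Prop :=
  ∀ a : Site d, μ.map (shift a) = μ

/-- The cube `C_n = [-n,n]^d ∩ ℤ^d` as a finite set of sites. -/
noncomputable def cube (d n : ℕ) : Finset (Site d) :=
  Fintype.piFinset fun _ : Fin d => Finset.Icc (-(n : ℤ)) (n : ℤ)

/-! The count of plus spins `N_Λ` in a box `Λ` has oscillation `1` at each site of `Λ`, so
`GCB(C)` forces `μ(N_Λ - E N_Λ ≥ t) ≤ exp(-t²/(2C|Λ|))`. On the all-plus cylinder `+_Λ`,
`N_Λ - E N_Λ = θ|Λ|` with `θ = μ(σ_0 = -1) > 0` by translation invariance and `μ ≠ δ_+`, so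
`μ(+_{C_n}) ≤ exp(-θ²|C_n|/(2C)) ≤ exp(-θ² n^d/(2C))`, which decays faster than the assumed
lower bound `exp(-c n^{d-1})` as `n → ∞`. -/

section Oscillation

variable {ι : Type*}

theorem LocalOn.exists_eq_comp_restrict {Λ : Finset ι} {f : Config ι → ℝ} (hf : LocalOn Λ f) :
    ∃ g : (Λ → Bool) → ℝ, f = g ∘ Λ.restrict := by
  classical
  exact ⟨fun τ => f fun x => if h : x ∈ Λ then τ ⟨x, h⟩ else true,
    funext fun σ => hf _ _ fun x hx => by simp [hx]⟩

theorem IsLocal.comp {f : Config ι → ℝ} (hf : IsLocal f) (g : ℝ → ℝ) : IsLocal (g ∘ f) :=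
  let ⟨Λ, hΛ⟩ := hf
  ⟨Λ, fun σ τ h => congrArg g (hΛ σ τ h)⟩

theorem IsLocal.measurable {f : Config ι → ℝ} (hf : IsLocal f) : Measurable f := by
  obtain ⟨Λ, hΛ⟩ := hf
  obtain ⟨g, rfl⟩ := hΛ.exists_eq_comp_restrict
  exact (measurable_of_countable g).comp (Finset.measurable_restrict Λ)

theorem IsLocal.integrable {f : Config ι → ℝ} (hf : IsLocal f) (μ : Measure (Config ι))
    [IsFiniteMeasure μ] : Integrable f μ := by
  have hmeas := hf.measurable
  obtain ⟨Λ, hΛ⟩ := hf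
  obtain ⟨g, rfl⟩ := hΛ.exists_eq_comp_restrict
  obtain ⟨M, hM⟩ := (Set.finite_range fun τ => ‖g τ‖).bddAbove
  exact .of_bound hmeas.aestronglyMeasurable M
    (ae_of_all _ fun σ => hM ⟨Λ.restrict σ, rfl⟩)

variable [DecidableEq ι]

theorem osc_const_mul {a : ℝ} (ha : 0 ≤ a) (f : Config ι → ℝ) (x : ι) :
    osc (fun σ => a * f σ) x = a * osc f x := by
  simp only [osc, ← mul_sub, Real.mul_iSup_of_nonneg ha]

theorem oscNormSq_const_mul {a : ℝ} (ha : 0 ≤ a) (f : Config ι → ℝ) :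
    oscNormSq (fun σ => a * f σ) = a ^ 2 * oscNormSq f := by
  simp only [oscNormSq, osc_const_mul ha, mul_pow, tsum_mul_left]

theorem oscNormSq_nonneg (f : Config ι → ℝ) : 0 ≤ oscNormSq f :=
  tsum_nonneg fun _ => sq_nonneg _

end Oscillation

namespace GCB

variable {ι : Type*} [DecidableEq ι] {μ : Measure (Config ι)} [IsProbabilityMeasure μ] {C : ℝ}
  {f : Config ι → ℝ}

theorem integral_exp_le (h : GCB μ C) (hf : IsLocal f) {a : ℝ} (ha : 0 ≤ a) :
    ∫ σ, Real.exp (a * (f σ - ∫ τ, f τ ∂μ)) ∂μ ≤ Real.exp (C / 2 * a ^ 2 * oscNormSq f) := by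
  have hpos : 0 < ∫ σ, Real.exp (a * (f σ - ∫ τ, f τ ∂μ)) ∂μ :=
    integral_exp_pos ((hf.comp fun y => Real.exp (a * (y - ∫ τ, f τ ∂μ))).integrable μ)
  have hgcb := h (fun σ => a * f σ) (hf.comp (a * ·))
  rw [integral_const_mul, oscNormSq_const_mul ha] at hgcb
  rw [← Real.log_le_iff_le_exp hpos]
  simpa only [mul_sub, mul_assoc] using hgcb

theorem measureReal_le_exp (h : GCB μ C) (hf : IsLocal f) {a : ℝ} (ha : 0 ≤ a) (t : ℝ) :
    μ.real {σ | t ≤ f σ - ∫ τ, f τ ∂μ} ≤ Real.exp (C / 2 * a ^ 2 * oscNormSq f - a * t) := by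
  set g := fun σ => Real.exp (a * (f σ - ∫ τ, f τ ∂μ))
  have hmarkov : Real.exp (a * t) * μ.real {σ | Real.exp (a * t) ≤ g σ} ≤ ∫ σ, g σ ∂μ :=
    mul_meas_ge_le_integral_of_nonneg (ae_of_all _ fun _ => (Real.exp_pos _).le)
      ((hf.comp fun y => Real.exp (a * (y - ∫ τ, f τ ∂μ))).integrable μ) _
  have hsub : {σ | t ≤ f σ - ∫ τ, f τ ∂μ} ⊆ {σ | Real.exp (a * t) ≤ g σ} := fun σ hσ =>
    Real.exp_le_exp.2 (mul_le_mul_of_nonneg_left hσ ha)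
  rw [Real.exp_sub, le_div_iff₀' (Real.exp_pos _)]
  exact ((mul_le_mul_of_nonneg_left (measureReal_mono hsub) (Real.exp_pos _).le).trans
    hmarkov).trans (h.integral_exp_le hf ha)

theorem measureReal_le_exp_neg_sq (h : GCB μ C) (hC : 0 ≤ C) (hf : IsLocal f) {t : ℝ}
    (ht : 0 ≤ t) :
    μ.real {σ | t ≤ f σ - ∫ τ, f τ ∂μ} ≤ Real.exp (-t ^ 2 / (2 * C * oscNormSq f)) := by
  rcases (mul_nonneg hC (oscNormSq_nonneg f)).eq_or_lt with hv | hv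
  · simp [mul_assoc, ← hv, measureReal_le_one]
  · convert h.measureReal_le_exp hf (div_nonneg ht hv.le) t using 2
    have hC0 : C ≠ 0 := left_ne_zero_of_mul hv.ne'
    have hS0 : oscNormSq f ≠ 0 := right_ne_zero_of_mul hv.ne'
    field_simp
    ring

end GCB

section PlusCount

variable {ι : Type*}

theorem measurableSet_eval_eq (x : ι) (b : Bool) : MeasurableSet {σ : Config ι | σ x = b} :=
  (measurableSet_singleton b).preimage (measurable_pi_apply x)

noncomputable def plusCount (Λ : Finset ι) (σ : Config ι) : ℝ :=
  ∑ x ∈ Λ, if σ x then 1 else 0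

theorem isLocal_plusCount (Λ : Finset ι) : IsLocal (plusCount Λ) :=
  ⟨Λ, fun σ τ h => Finset.sum_congr rfl fun x hx => by rw [h x hx]⟩

theorem plusCount_of_mem_cyl {Λ : Finset ι} {σ : Config ι} (hσ : σ ∈ cyl Λ fun _ => true) :
    plusCount Λ σ = Λ.card := by
  simp [plusCount, Finset.sum_ite_of_true fun x hx => hσ x hx]

theorem integral_plusCount (μ : Measure (Config ι)) [IsFiniteMeasure μ] (Λ : Finset ι) :
    ∫ σ, plusCount Λ σ ∂μ = ∑ x ∈ Λ, μ.real {σ | σ x = true} := by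
  have hind : plusCount Λ = fun σ => ∑ x ∈ Λ, Set.indicator {σ | σ x = true} 1 σ := by
    ext σ; simp [plusCount, Set.indicator_apply]
  rw [hind, integral_finsetSum _ fun x _ =>
    (integrable_const 1).indicator (measurableSet_eval_eq x true)]
  exact Finset.sum_congr rfl fun x _ => integral_indicator_one (measurableSet_eval_eq x true)

theorem card_sub_integral_plusCount (μ : Measure (Config ι)) [IsProbabilityMeasure μ]
    (Λ : Finset ι) :
    Λ.card - ∫ σ, plusCount Λ σ ∂μ = ∑ x ∈ Λ, μ.real {σ | σ x = false} := by
  rw [integral_plusCount, ← nsmul_one, ← Finset.sum_const, ← Finset.sum_sub_distrib]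
  refine Finset.sum_congr rfl fun x _ => ?_
  rw [← probReal_compl_eq_one_sub (measurableSet_eval_eq x true)]
  congr 1
  ext σ
  simp

variable [DecidableEq ι]

theorem plusCount_flipAt_sub (Λ : Finset ι) (σ : Config ι) (x : ι) :
    plusCount Λ (flipAt σ x) - plusCount Λ σ =
      if x ∈ Λ then (if σ x then -1 else 1) else 0 := by
  have hne {y : ι} (hy : y ≠ x) : flipAt σ x y = σ y := Function.update_of_ne hy _ _
  rw [plusCount, plusCount, ← Finset.sum_sub_distrib]
  by_cases hx : x ∈ Λ
  · rw [if_pos hx, Finset.sum_eq_single_of_mem x hx fun y _ hy => by simp [hne hy]]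
    cases h : σ x <;> simp [flipAt, h]
  · rw [if_neg hx]
    exact Finset.sum_eq_zero fun y hy => by simp [hne (ne_of_mem_of_not_mem hy hx)]

theorem osc_plusCount (Λ : Finset ι) (x : ι) :
    osc (plusCount Λ) x = if x ∈ Λ then 1 else 0 := by
  simp only [osc, plusCount_flipAt_sub]
  split_ifs with hx
  · have hle (σ : Config ι) : (if σ x then (-1 : ℝ) else 1) ≤ 1 := by split_ifs <;> norm_num
    exact le_antisymm (ciSup_le hle) (le_ciSup_of_le ⟨1, Set.forall_mem_range.2 hle⟩
      (fun _ => false) (by simp))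
  · exact ciSup_const

theorem oscNormSq_plusCount (Λ : Finset ι) : oscNormSq (plusCount Λ) = Λ.card := by
  rw [oscNormSq, tsum_eq_sum (s := Λ) fun x hx => by simp [osc_plusCount, hx]]
  simp +contextual [osc_plusCount]

end PlusCount

theorem GCB.measureReal_cyl_true_le {ι : Type*} [DecidableEq ι] {μ : Measure (Config ι)}
    [IsProbabilityMeasure μ] {C : ℝ} (h : GCB μ C) (hC : 0 ≤ C) (Λ : Finset ι) :
    μ.real (cyl Λ fun _ => true) ≤
      Real.exp (-(∑ x ∈ Λ, μ.real {σ | σ x = false}) ^ 2 / (2 * C * Λ.card)) := by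
  have hdeficit := card_sub_integral_plusCount μ Λ
  rw [← oscNormSq_plusCount, ← hdeficit]
  refine (measureReal_mono fun σ hσ => ?_).trans
    (h.measureReal_le_exp_neg_sq hC (isLocal_plusCount Λ) ?_)
  · simp [plusCount_of_mem_cyl hσ]
  · rw [hdeficit]
    exact Finset.sum_nonneg fun _ _ => measureReal_nonneg

theorem eq_dirac_of_ae_eq {α : Type*} [MeasurableSpace α] {μ : Measure α}
    [IsProbabilityMeasure μ] {a : α} (h : ∀ᵐ x ∂μ, x = a) : μ = Measure.dirac a :=
  calc μ = μ.map id := Measure.map_id.symm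
    _ = μ.map fun _ => a := Measure.map_congr h
    _ = Measure.dirac a := by rw [Measure.map_const, measure_univ, one_smul]

namespace TransInv

variable {d : ℕ} {μ : Measure (Config (Site d))}

theorem measurable_shift (a : Site d) : Measurable (shift a) :=
  measurable_pi_lambda _ fun x => measurable_pi_apply (x + a)

theorem measure_eval_eq (hTI : TransInv μ) (x : Site d) (b : Bool) :
    μ {σ | σ x = b} = μ {σ | σ 0 = b} := by
  conv_rhs => rw [← hTI x]
  rw [Measure.map_apply (measurable_shift x) (measurableSet_eval_eq 0 b)]
  simp [shift]

theorem sum_measureReal_eval_eq (hTI : TransInv μ) (Λ : Finset (Site d)) (b : Bool) :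
    ∑ x ∈ Λ, μ.real {σ | σ x = b} = Λ.card * μ.real {σ | σ 0 = b} := by
  simp [measureReal_def, hTI.measure_eval_eq]

theorem measureReal_eval_zero_false_pos [IsProbabilityMeasure μ] (hTI : TransInv μ)
    (hne : μ ≠ Measure.dirac fun _ => true) : 0 < μ.real {σ | σ 0 = false} := by
  refine measureReal_nonneg.lt_of_ne fun h0 => hne (eq_dirac_of_ae_eq ?_)
  have hsite (x : Site d) : ∀ᵐ σ ∂μ, σ x = true := by
    rw [ae_iff]
    simp only [Bool.not_eq_true, hTI.measure_eval_eq x]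
    exact (measureReal_eq_zero_iff).1 h0.symm
  filter_upwards [ae_all_iff.2 hsite] with σ hσ using funext hσ

end TransInv

theorem GCB.measureReal_cyl_true_le_of_transInv {d : ℕ} {μ : Measure (Config (Site d))}
    [IsProbabilityMeasure μ] {C : ℝ} (h : GCB μ C) (hC : 0 ≤ C) (hTI : TransInv μ)
    (Λ : Finset (Site d)) :
    μ.real (cyl Λ fun _ => true) ≤
      Real.exp (-(Λ.card * μ.real {σ | σ 0 = false} ^ 2 / (2 * C))) := by
  have hbound := h.measureReal_cyl_true_le hC Λ
  rw [hTI.sum_measureReal_eval_eq] at hbound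
  rcases eq_or_ne (Λ.card : ℝ) 0 with hΛ | hΛ
  · simp [hΛ]
  · convert hbound using 2
    rw [neg_div, ← mul_div_mul_right _ (2 * C) hΛ]
    ring

theorem card_cube (d n : ℕ) : (cube d n).card = (2 * n + 1) ^ d := by
  simp only [cube, Fintype.card_piFinset, Int.card_Icc, Finset.prod_const, Finset.card_univ,
    Fintype.card_fin]
  congr 1
  omega

theorem pow_le_card_cube (d n : ℕ) : (n : ℝ) ^ d ≤ (cube d n).card := by
  rw [card_cube]
  exact_mod_cast Nat.pow_le_pow_left (by omega) d

theorem toom_invariant_measure_no_gcb_general {d : ℕ} (hd : 1 ≤ d)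
    (μ : Measure (Config (Site d))) [IsProbabilityMeasure μ]
    (hTI : TransInv μ) (c : ℝ)
    (hlb : ∀ n : ℕ,
      ENNReal.ofReal (Real.exp (-c * (n : ℝ) ^ (d - 1))) ≤
        μ (cyl (cube d n) (fun _ => true)))
    (hne : μ ≠ Measure.dirac (fun _ => true)) :
    ∀ C : ℝ, 0 < C → ¬ GCB μ C := by
  intro C hC hGCB
  set q := μ.real {σ | σ 0 = false}
  have hq : 0 < q := hTI.measureReal_eval_zero_false_pos hne
  have hgrowth (n : ℕ) (hn : 0 < n) : q ^ 2 * n ≤ 2 * C * c := by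
    have hm : (0 : ℝ) < (n : ℝ) ^ (d - 1) := by positivity
    have hlower : Real.exp (-c * (n : ℝ) ^ (d - 1)) ≤ μ.real (cyl (cube d n) fun _ => true) :=
      (ENNReal.ofReal_le_iff_le_toReal (measure_ne_top _ _)).1 (hlb n)
    have hexp := Real.exp_le_exp.1
      (hlower.trans (hGCB.measureReal_cyl_true_le_of_transInv hC.le hTI (cube d n)))
    have hcard : (n : ℝ) * (n : ℝ) ^ (d - 1) ≤ (cube d n).card := by
      rw [← pow_succ', Nat.sub_add_cancel hd]
      exact pow_le_card_cube d n
    rw [neg_mul, neg_le_neg_iff, div_le_iff₀ (by positivity)] at hexp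
    refine le_of_mul_le_mul_right ?_ hm
    linarith [mul_le_mul_of_nonneg_right hcard (sq_nonneg q)]
  obtain ⟨n, hn⟩ := exists_nat_gt (2 * C * c / q ^ 2)
  have := hgrowth (n + 1) n.succ_pos
  rw [div_lt_iff₀ (by positivity)] at hn
  push_cast at this
  linarith [pow_pos hq 2]

/-- let `μ` be a translation-invariant invariant measure of a PCA
(e.g. Toom's or Stavskaya's model with totally asymmetric noise) satisfying the
lower bound `μ(+_{C_n}) ≥ e^{-c n^{d-1}}` on the probability of seeing all `+`
spins in the cube `C_n`. If `μ ≠ δ_+`, then `μ` does not satisfy `GCB(C)` for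
any `C > 0`. -/
theorem toom_invariant_measure_no_gcb {d : ℕ} (hd : 1 ≤ d) (P : PCA d)
    (μ : Measure (Config (Site d))) [IsProbabilityMeasure μ]
    (hstat : Pmeas P μ = μ) (hTI : TransInv μ) (c : ℝ) (hc : 0 < c)
    (hlb : ∀ n : ℕ,
      ENNReal.ofReal (Real.exp (-c * (n : ℝ) ^ (d - 1))) ≤
        μ (cyl (cube d n) (fun _ => true)))
    (hne : μ ≠ Measure.dirac (fun _ => true)) :
    ∀ C : ℝ, 0 < C → ¬ GCB μ C :=
  toom_invariant_measure_no_gcb_general hd μ hTI c hlb hne
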